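/- arXiv:2310.17759 — 2 statements merged into one kernel-verified Lean document; each statement's English description precedes it below -/
import Mathlib

section
/- Let E and E' be real Hilbert spaces, X ⊆ E and Y ⊆ E' nonempty convex sets, and F : E × E' → ℝ a differentiable function that is convex-concave on X × Y, with saddle operator G(x,y) = (∇_x F(x,y), −∇_y F(x,y)). Let α > 0, ε̂ ≥ 0, T ≥ 1, and let z₀, z₁, …, z_T ∈ X × Y be points such that for each t = 0, …, T−1, ⟪G(z_{t+1}) + (1/α)·(z_{t+1} − z_t), z_{t+1} − z⟫ ≤ ε̂ for every z ∈ X × Y. Let (x̄_{T+1}, ȳ_{T+1}) = (1/T)·Σ_{t=0}^{T−1} z_{t+1}. Then for every z = (x, y) ∈ X × Y: F(x̄_{T+1}, y) − F(x, ȳ_{T+1}) ≤ ‖z₀ − z‖²/(2αT) + ε̂. -/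
/-!
At each step the gap `F (p.1, y) - F (x, p.2)` of the new iterate `p` is at most `⟪G p, p - w⟫`
by the first-order conditions of convexity in `x` and concavity in `y`, and the three-point
identity turns the proximal term of the variational inequality into the telescoping difference
`(‖z t - w‖² - ‖z (t + 1) - w‖²) / (2α)`. Summing over `t` and applying Jensen's inequality to
the gap, which is convex in `p`, bounds the gap of the averaged iterate.
-/

open RealInnerProductSpace

noncomputable section

variable {E E' : Type*} [NormedAddCommGroup E] [InnerProductSpace ℝ E] [CompleteSpace E]
  [NormedAddCommGroup E'] [InnerProductSpace ℝ E'] [CompleteSpace E']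

/-- The saddle operator `G(x,y) = (∇ₓ F(x,y), −∇_y F(x,y))` on the Hilbert product
`WithLp 2 (E × E')`. -/
def saddleOp (F : E × E' → ℝ) (z : WithLp 2 (E × E')) : WithLp 2 (E × E') :=
  (WithLp.equiv 2 (E × E')).symm
    (gradient (fun u => F (u, (WithLp.equiv 2 (E × E') z).2)) (WithLp.equiv 2 (E × E') z).1,
     -gradient (fun v => F ((WithLp.equiv 2 (E × E') z).1, v)) (WithLp.equiv 2 (E × E') z).2)

/-- `X × Y` as a subset of the Hilbert product. -/
def prodSet (X : Set E) (Y : Set E') : Set (WithLp 2 (E × E')) :=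
  (WithLp.equiv 2 (E × E')) ⁻¹' (X ×ˢ Y)

open Finset

section FirstOrder

variable {V : Type*} [NormedAddCommGroup V] [NormedSpace ℝ V] {s : Set V} {f : V → ℝ}
  {f' : V →L[ℝ] ℝ} {a b : V}

theorem ConvexOn.apply_sub_le_sub_of_hasFDerivAt (hf : ConvexOn ℝ s f) (ha : a ∈ s) (hb : b ∈ s)
    (hfa : HasFDerivAt f f' a) : f' (b - a) ≤ f b - f a := by
  set ℓ : ℝ →ᵃ[ℝ] V := AffineMap.lineMap a b
  have hline : ConvexOn ℝ (ℓ ⁻¹' s) (f ∘ ℓ) := hf.comp_affineMap ℓ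
  have hderiv : HasDerivAt (f ∘ ℓ) (f' (b - a)) 0 := by
    have hfa' : HasFDerivAt f f' (AffineMap.lineMap a b (0 : ℝ)) := by simpa using hfa
    simpa using hfa'.comp_hasDerivAt (0 : ℝ) AffineMap.hasDerivAt_lineMap
  simpa [ℓ, slope_def_field] using
    hline.le_slope_of_hasDerivAt (by simpa [ℓ] using ha) (by simpa [ℓ] using hb) one_pos hderiv

theorem ConcaveOn.sub_le_apply_sub_of_hasFDerivAt (hf : ConcaveOn ℝ s f) (ha : a ∈ s)
    (hb : b ∈ s) (hfa : HasFDerivAt f f' a) : f b - f a ≤ f' (b - a) := by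
  have := hf.neg.apply_sub_le_sub_of_hasFDerivAt ha hb hfa.neg
  simp only [neg_apply, Pi.neg_apply] at this
  linarith

end FirstOrder

theorem ConvexOn.map_card_inv_smul_sum_le {V ι : Type*} [AddCommGroup V] [Module ℝ V] {S : Set V}
    {f : V → ℝ} {s : Finset ι} {z : ι → V} (hf : ConvexOn ℝ S f) (hs : s.Nonempty)
    (hz : ∀ i ∈ s, z i ∈ S) :
    f ((#s : ℝ)⁻¹ • ∑ i ∈ s, z i) ≤ (#s : ℝ)⁻¹ * ∑ i ∈ s, f (z i) := by
  have hcard : (0 : ℝ) < #s := by exact_mod_cast hs.card_pos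
  simpa [smul_sum, mul_sum] using
    hf.map_sum_le (t := s) (w := fun _ => (#s : ℝ)⁻¹) (fun _ _ => by positivity)
      (by simp [hcard.ne']) hz

theorem inner_le_of_inner_add_smul_sub_le {H : Type*} [NormedAddCommGroup H]
    [InnerProductSpace ℝ H] {g p q w : H} {α ε : ℝ} (hα : 0 < α)
    (h : ⟪g + (1 / α) • (p - q), p - w⟫ ≤ ε) :
    ⟪g, p - w⟫ ≤ ε + (‖q - w‖ ^ 2 - ‖p - w‖ ^ 2) / (2 * α) := by
  have three_point : ‖p - w‖ ^ 2 - ‖q - w‖ ^ 2 ≤ 2 * ⟪p - q, p - w⟫ := by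
    have := norm_sub_sq_real (p - w) (p - q)
    rw [sub_sub_sub_cancel_left, real_inner_comm] at this
    nlinarith [sq_nonneg ‖p - q‖]
  rw [inner_add_left, real_inner_smul_left] at h
  have : -(1 / α * ⟪p - q, p - w⟫) ≤ (‖q - w‖ ^ 2 - ‖p - w‖ ^ 2) / (2 * α) := by
    rw [le_div_iff₀ (by positivity)]
    field_simp
    linarith
  linarith

theorem sum_range_le_of_le_add_sub_div {b a : ℕ → ℝ} {ε c : ℝ} {T : ℕ} (hc : 0 ≤ c)
    (ha : 0 ≤ a T) (h : ∀ t < T, b t ≤ ε + (a t - a (t + 1)) / c) :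
    ∑ t ∈ range T, b t ≤ T * ε + a 0 / c :=
  calc ∑ t ∈ range T, b t ≤ ∑ t ∈ range T, (ε + (a t - a (t + 1)) / c) :=
        sum_le_sum fun t ht => h t (mem_range.mp ht)
    _ = T * ε + (a 0 - a T) / c := by
        rw [sum_add_distrib, ← sum_div, sum_range_sub' a T]; simp
    _ ≤ T * ε + a 0 / c := by gcongr; linarith

section Saddle

variable {X : Set E} {Y : Set E'} {F : E × E' → ℝ}

omit [CompleteSpace E] [CompleteSpace E'] in
theorem convexOn_prodSet_sub {x : E} {y : E'} (hcvx : ConvexOn ℝ X fun u => F (u, y))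
    (hccv : ConcaveOn ℝ Y fun v => F (x, v)) :
    ConvexOn ℝ (prodSet X Y) fun p => F (p.fst, y) - F (x, p.snd) := by
  have hconv : Convex ℝ (prodSet X Y) :=
    (hcvx.1.prod hccv.1).linear_preimage (WithLp.linearEquiv 2 ℝ (E × E')).toLinearMap
  simp_rw [sub_eq_add_neg]
  exact ((hcvx.comp_linearMap (WithLp.fstₗ 2 ℝ E E')).subset (fun p hp => hp.1) hconv).add
    ((hccv.neg.comp_linearMap (WithLp.sndₗ 2 ℝ E E')).subset (fun p hp => hp.2) hconv)

theorem sub_le_inner_saddleOp {p w : WithLp 2 (E × E')}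
    (hcvx : ConvexOn ℝ X fun u => F (u, p.snd)) (hccv : ConcaveOn ℝ Y fun v => F (p.fst, v))
    (hF : DifferentiableAt ℝ F (p.fst, p.snd)) (hp : p ∈ prodSet X Y) (hw : w ∈ prodSet X Y) :
    F (p.fst, w.snd) - F (w.fst, p.snd) ≤ ⟪saddleOp F p, p - w⟫ := by
  have hx : DifferentiableAt ℝ (fun u => F (u, p.snd)) p.fst := by fun_prop
  have hy : DifferentiableAt ℝ (fun v => F (p.fst, v)) p.snd := by fun_prop
  obtain ⟨hpX, hpY⟩ : p.fst ∈ X ∧ p.snd ∈ Y := hp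
  obtain ⟨hwX, hwY⟩ : w.fst ∈ X ∧ w.snd ∈ Y := hw
  have h₁ := hcvx.apply_sub_le_sub_of_hasFDerivAt hpX hwX hx.hasFDerivAt
  have h₂ := hccv.sub_le_apply_sub_of_hasFDerivAt hpY hwY hy.hasFDerivAt
  have hG : ⟪saddleOp F p, p - w⟫ =
      -fderiv ℝ (fun u => F (u, p.snd)) p.fst (w.fst - p.fst) +
        fderiv ℝ (fun v => F (p.fst, v)) p.snd (w.snd - p.snd) := by
    simp [saddleOp, inner_gradient_left]
  linarith

end Saddle

theorem inexact_ppm_convergence_general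
    (X : Set E) (Y : Set E')
    (F : E × E' → ℝ) (hFdiff : Differentiable ℝ F)
    (hcvx : ∀ y ∈ Y, ConvexOn ℝ X (fun x => F (x, y)))
    (hccv : ∀ x ∈ X, ConcaveOn ℝ Y (fun y => F (x, y)))
    (α εh : ℝ) (hα : 0 < α)
    (T : ℕ) (hT : 1 ≤ T)
    (z : ℕ → WithLp 2 (E × E')) (hzS : ∀ t ≤ T, z t ∈ prodSet X Y)
    (hsub : ∀ t < T, ∀ w ∈ prodSet X Y,
      ⟪saddleOp F (z (t + 1)) + (1 / α) • (z (t + 1) - z t), z (t + 1) - w⟫ ≤ εh) :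
    ∀ x ∈ X, ∀ y ∈ Y,
      F ((WithLp.equiv 2 (E × E') ((T : ℝ)⁻¹ • ∑ t ∈ Finset.range T, z (t + 1))).1, y) -
        F (x, (WithLp.equiv 2 (E × E') ((T : ℝ)⁻¹ • ∑ t ∈ Finset.range T, z (t + 1))).2) ≤
      ‖z 0 - (WithLp.equiv 2 (E × E')).symm (x, y)‖ ^ 2 / (2 * α * T) + εh := by
  intro x hx y hy
  set w := (WithLp.equiv 2 (E × E')).symm (x, y)
  have hw : w ∈ prodSet X Y := ⟨hx, hy⟩
  have hstep : ∀ t < T, F ((z (t + 1)).fst, y) - F (x, (z (t + 1)).snd) ≤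
      εh + (‖z t - w‖ ^ 2 - ‖z (t + 1) - w‖ ^ 2) / (2 * α) := fun t ht =>
    have hp := hzS (t + 1) ht
    (sub_le_inner_saddleOp (hcvx _ hp.2) (hccv _ hp.1) (hFdiff _) hp hw).trans
      (inner_le_of_inner_add_smul_sub_le hα (hsub t ht w hw))
  have hjensen := (convexOn_prodSet_sub (hcvx y hy) (hccv x hx)).map_card_inv_smul_sum_le
    (nonempty_range_iff.mpr (by omega)) fun t ht => hzS (t + 1) (mem_range.mp ht)
  rw [card_range] at hjensen
  calc _ ≤ (T : ℝ)⁻¹ * ∑ t ∈ range T, (F ((z (t + 1)).fst, y) - F (x, (z (t + 1)).snd)) :=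
        hjensen
    _ ≤ (T : ℝ)⁻¹ * (T * εh + ‖z 0 - w‖ ^ 2 / (2 * α)) := by
        gcongr
        exact sum_range_le_of_le_add_sub_div (a := fun t => ‖z t - w‖ ^ 2) (by positivity)
          (sq_nonneg _) hstep
    _ = ‖z 0 - w‖ ^ 2 / (2 * α * T) + εh := by field_simp; ring

/-- Lemma D.1: convergence of the inexact proximal point method.
If each proximal sub-problem is solved to variational-inequality accuracy `ε̂`, i.e.
`⟪G(z_{t+1}) + (1/α)(z_{t+1} − z_t), z_{t+1} − z⟫ ≤ ε̂` for all `z ∈ X × Y`, then the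
averaged iterate satisfies `F(x̄_{T+1}, y) − F(x, ȳ_{T+1}) ≤ ‖z₀ − z‖²/(2αT) + ε̂`. -/
theorem inexact_ppm_convergence
    (X : Set E) (Y : Set E') (hXne : X.Nonempty) (hYne : Y.Nonempty)
    (hXcv : Convex ℝ X) (hYcv : Convex ℝ Y)
    (F : E × E' → ℝ) (hFdiff : Differentiable ℝ F)
    (hcvx : ∀ y ∈ Y, ConvexOn ℝ X (fun x => F (x, y)))
    (hccv : ∀ x ∈ X, ConcaveOn ℝ Y (fun y => F (x, y)))
    (α εh : ℝ) (hα : 0 < α) (hεh : 0 ≤ εh)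
    (T : ℕ) (hT : 1 ≤ T)
    (z : ℕ → WithLp 2 (E × E')) (hzS : ∀ t ≤ T, z t ∈ prodSet X Y)
    (hsub : ∀ t < T, ∀ w ∈ prodSet X Y,
      ⟪saddleOp F (z (t + 1)) + (1 / α) • (z (t + 1) - z t), z (t + 1) - w⟫ ≤ εh) :
    ∀ x ∈ X, ∀ y ∈ Y,
      F ((WithLp.equiv 2 (E × E') ((T : ℝ)⁻¹ • ∑ t ∈ Finset.range T, z (t + 1))).1, y) -
        F (x, (WithLp.equiv 2 (E × E') ((T : ℝ)⁻¹ • ∑ t ∈ Finset.range T, z (t + 1))).2) ≤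
      ‖z 0 - (WithLp.equiv 2 (E × E')).symm (x, y)‖ ^ 2 / (2 * α * T) + εh :=
  inexact_ppm_convergence_general X Y F hFdiff hcvx hccv α εh hα T hT z hzS hsub
end
end

section
/- Let E and E' be real Hilbert spaces, X ⊆ E and Y ⊆ E' nonempty closed convex sets each of diameter at most D, and F : E × E' → ℝ a differentiable function that is convex-concave on X × Y and whose saddle operator G(x,y) = (∇_x F(x,y), −∇_y F(x,y)) is ℓ-Lipschitz on X × Y. Let ε > 0, δ ≥ 0, set r = ε/D² and ε_r = ε·min{1, δ²/(8D²)}, and fix z₀, z₀' ∈ X × Y with ‖z₀ − z₀'‖ ≤ δ. Suppose z_r = (x_r, y_r) ∈ X × Y satisfies ⟪G(z_r) + r·(z_r − z₀), z_r − z⟫ ≤ ε_r for every z ∈ X × Y, and z_r' = (x_r', y_r') ∈ X × Y satisfies ⟪G(z_r') + r·(z_r' − z₀'), z_r' − z⟫ ≤ ε_r for every z ∈ X × Y. Then F(x_r, y) − F(x, y_r) ≤ 2ε for every (x, y) ∈ X × Y, and ‖z_r − z_r'‖² ≤ 4δ². -/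
/-!
Convexity in `x` and concavity in `y` give the first-order bound
`F(x_r, y) - F(x, y_r) ≤ ⟪G z_r, z_r - z⟫` for `z = (x, y) ∈ X × Y`. By the variational
inequality this is at most `ε_r + r⟪z_r - z₀, z - z_r⟫ ≤ ε_r + r‖z₀ - z‖²/4 ≤ ε + rD²/2`,
and `rD² = ε`. Adding the same bound with the two points exchanged shows that `G` is monotone;
adding the two regularized inequalities, each tested at the other solution, then gives
`r‖z_r - z_r'‖² ≤ 2ε_r + r⟪z₀ - z₀', z_r - z_r'⟫ ≤ rδ²/4 + rδ‖z_r - z_r'‖`,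
so `‖z_r - z_r'‖ ≤ 2δ`.
-/

open RealInnerProductSpace

noncomputable section

variable {E E' : Type*} [NormedAddCommGroup E] [InnerProductSpace ℝ E] [CompleteSpace E]
  [NormedAddCommGroup E'] [InnerProductSpace ℝ E'] [CompleteSpace E']

section Convexity

variable {V : Type*} [NormedAddCommGroup V] [NormedSpace ℝ V] {f : V → ℝ} {s : Set V} {x u : V}

theorem ConvexOn.fderiv_sub_le (hf : ConvexOn ℝ s f) (hx : x ∈ s) (hu : u ∈ s)
    (hfx : DifferentiableAt ℝ f x) : fderiv ℝ f x (u - x) ≤ f u - f x := by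
  have hline : HasDerivAt (f ∘ AffineMap.lineMap (k := ℝ) x u) (fderiv ℝ f x (u - x)) 0 :=
    hfx.hasFDerivAt.comp_hasDerivAt_of_eq 0 AffineMap.hasDerivAt_lineMap
      (AffineMap.lineMap_apply_zero x u).symm
  have hslope := (hf.comp_affineMap (AffineMap.lineMap x u)).le_slope_of_hasDerivAt
    (by simpa using hx) (by simpa using hu) zero_lt_one hline
  simpa [slope_def_field] using hslope

theorem ConcaveOn.sub_le_fderiv (hf : ConcaveOn ℝ s f) (hx : x ∈ s) (hu : u ∈ s)
    (hfx : DifferentiableAt ℝ f x) : f u - f x ≤ fderiv ℝ f x (u - x) := by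
  have hneg := hf.neg.fderiv_sub_le hx hu hfx.neg
  rw [fderiv_neg] at hneg
  simp only [neg_apply, Pi.neg_apply] at hneg
  linarith

end Convexity

section RegularizedVI

variable {H : Type*} [NormedAddCommGroup H] [InnerProductSpace ℝ H]

theorem real_inner_le_norm_add_sq_div_four (a b : H) : ⟪a, b⟫ ≤ ‖a + b‖ ^ 2 / 4 := by
  nlinarith [norm_add_sq_real a b, norm_sub_sq_real a b, sq_nonneg ‖a - b‖]

theorem inner_le_of_regularized_vi {g z z₀ u : H} {r η : ℝ} (hr : 0 ≤ r)
    (h : ⟪g + r • (z - z₀), z - u⟫ ≤ η) : ⟪g, z - u⟫ ≤ η + r * ‖z₀ - u‖ ^ 2 / 4 := by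
  have hpol := real_inner_le_norm_add_sq_div_four (z₀ - z) (z - u)
  rw [sub_add_sub_cancel] at hpol
  rw [inner_add_left, real_inner_smul_left, ← neg_sub z₀ z, inner_neg_left] at h
  nlinarith

theorem norm_sub_sq_le_of_regularized_vi {T : H → H} {z z' z₀ z₀' : H} {r η : ℝ}
    (hmono : 0 ≤ ⟪T z - T z', z - z'⟫)
    (h : ⟪T z + r • (z - z₀), z - z'⟫ ≤ η) (h' : ⟪T z' + r • (z' - z₀'), z' - z⟫ ≤ η) :
    r * ‖z - z'‖ ^ 2 ≤ 2 * η + r * ⟪z₀ - z₀', z - z'⟫ := by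
  have hsplit : ⟪z - z₀, z - z'⟫ - ⟪z' - z₀', z - z'⟫ = ‖z - z'‖ ^ 2 - ⟪z₀ - z₀', z - z'⟫ := by
    rw [← inner_sub_left, ← real_inner_self_eq_norm_sq, ← inner_sub_left]
    congr 1
    abel
  rw [← neg_sub z z', inner_neg_right] at h'
  rw [inner_add_left, real_inner_smul_left] at h h'
  rw [inner_sub_left] at hmono
  linear_combination h + h' + hmono - r * hsplit

end RegularizedVI

section Saddle

variable {X : Set E} {Y : Set E'} {F : E × E' → ℝ}

theorem inner_saddleOp (z w : WithLp 2 (E × E')) :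
    ⟪saddleOp F z, w⟫ = fderiv ℝ (fun u => F (u, z.snd)) z.fst w.fst
      - fderiv ℝ (fun v => F (z.fst, v)) z.snd w.snd := by
  simp only [saddleOp, WithLp.prod_inner_apply, WithLp.equiv_symm_apply,
    inner_neg_left, inner_gradient_left]
  rfl

theorem sub_le_inner_saddleOp_s18 (hF : Differentiable ℝ F)
    (hcvx : ∀ y ∈ Y, ConvexOn ℝ X (fun x => F (x, y)))
    (hccv : ∀ x ∈ X, ConcaveOn ℝ Y (fun y => F (x, y)))
    {z u : WithLp 2 (E × E')} (hz : z ∈ prodSet X Y) (hu : u ∈ prodSet X Y) :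
    F (z.fst, u.snd) - F (u.fst, z.snd) ≤ ⟪saddleOp F z, z - u⟫ := by
  obtain ⟨hzX, hzY⟩ : z.fst ∈ X ∧ z.snd ∈ Y := hz
  obtain ⟨huX, huY⟩ : u.fst ∈ X ∧ u.snd ∈ Y := hu
  have hx := (hcvx _ hzY).fderiv_sub_le hzX huX (by fun_prop)
  have hy := (hccv _ hzX).sub_le_fderiv hzY huY (by fun_prop)
  rw [inner_saddleOp, WithLp.sub_fst, WithLp.sub_snd, ← neg_sub u.fst, ← neg_sub u.snd, map_neg,
    map_neg]
  linarith

theorem inner_saddleOp_sub_nonneg (hF : Differentiable ℝ F)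
    (hcvx : ∀ y ∈ Y, ConvexOn ℝ X (fun x => F (x, y)))
    (hccv : ∀ x ∈ X, ConcaveOn ℝ Y (fun y => F (x, y)))
    {z z' : WithLp 2 (E × E')} (hz : z ∈ prodSet X Y) (hz' : z' ∈ prodSet X Y) :
    0 ≤ ⟪saddleOp F z - saddleOp F z', z - z'⟫ := by
  have h := sub_le_inner_saddleOp_s18 hF hcvx hccv hz hz'
  have h' := sub_le_inner_saddleOp_s18 hF hcvx hccv hz' hz
  rw [← neg_sub z z', inner_neg_right] at h'
  rw [inner_sub_left]
  linarith

theorem norm_sub_sq_le_of_mem_prodSet {A B : Type*} [SeminormedAddCommGroup A]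
    [SeminormedAddCommGroup B] {X : Set A} {Y : Set B} {D : ℝ}
    (hXD : ∀ s₁ ∈ X, ∀ s₂ ∈ X, ‖s₁ - s₂‖ ≤ D) (hYD : ∀ s₁ ∈ Y, ∀ s₂ ∈ Y, ‖s₁ - s₂‖ ≤ D)
    {z u : WithLp 2 (A × B)} (hz : z ∈ prodSet X Y) (hu : u ∈ prodSet X Y) :
    ‖z - u‖ ^ 2 ≤ 2 * D ^ 2 := by
  obtain ⟨hzX, hzY⟩ : z.fst ∈ X ∧ z.snd ∈ Y := hz
  obtain ⟨huX, huY⟩ : u.fst ∈ X ∧ u.snd ∈ Y := hu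
  have hfst := pow_le_pow_left₀ (norm_nonneg _) (hXD _ hzX _ huX) 2
  have hsnd := pow_le_pow_left₀ (norm_nonneg _) (hYD _ hzY _ huY) 2
  rw [WithLp.prod_norm_sq_eq_of_L2, WithLp.sub_fst, WithLp.sub_snd]
  linarith

end Saddle

theorem regularized_minimax_inexact_init_general
    (X : Set E) (Y : Set E')
    (D : ℝ) (hD : 0 < D)
    (hXD : ∀ s₁ ∈ X, ∀ s₂ ∈ X, ‖s₁ - s₂‖ ≤ D) (hYD : ∀ s₁ ∈ Y, ∀ s₂ ∈ Y, ‖s₁ - s₂‖ ≤ D)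
    (F : E × E' → ℝ) (hFdiff : Differentiable ℝ F)
    (hcvx : ∀ y ∈ Y, ConvexOn ℝ X (fun x => F (x, y)))
    (hccv : ∀ x ∈ X, ConcaveOn ℝ Y (fun y => F (x, y)))
    (ε δ : ℝ) (hε : 0 < ε)
    (r εr : ℝ) (hr : r = ε / D ^ 2) (hεr : εr = ε * min 1 (δ ^ 2 / (8 * D ^ 2)))
    (z₀ z₀' : WithLp 2 (E × E')) (hz₀ : z₀ ∈ prodSet X Y)
    (hdev : ‖z₀ - z₀'‖ ≤ δ)
    (zr zr' : WithLp 2 (E × E')) (hzrS : zr ∈ prodSet X Y) (hzr'S : zr' ∈ prodSet X Y)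
    (hzr : ∀ z ∈ prodSet X Y, ⟪saddleOp F zr + r • (zr - z₀), zr - z⟫ ≤ εr)
    (hzr' : ∀ z ∈ prodSet X Y, ⟪saddleOp F zr' + r • (zr' - z₀'), zr' - z⟫ ≤ εr) :
    (∀ x ∈ X, ∀ y ∈ Y,
      F ((WithLp.equiv 2 (E × E') zr).1, y) - F (x, (WithLp.equiv 2 (E × E') zr).2) ≤ 2 * ε) ∧
    ‖zr - zr'‖ ^ 2 ≤ 4 * δ ^ 2 := by
  have hr_pos : 0 < r := by rw [hr]; positivity
  have hrD : r * D ^ 2 = ε := by rw [hr]; field_simp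
  have hεr_le : εr ≤ ε := by
    rw [hεr]; exact mul_le_of_le_one_right hε.le (min_le_left _ _)
  have hεr_le' : εr ≤ r * δ ^ 2 / 8 := by
    calc εr ≤ ε * (δ ^ 2 / (8 * D ^ 2)) := by
          rw [hεr]; exact mul_le_mul_of_nonneg_left (min_le_right _ _) hε.le
      _ = r * δ ^ 2 / 8 := by rw [hr]; ring
  refine ⟨fun x hx y hy => ?_, ?_⟩
  · have hu : WithLp.toLp 2 (x, y) ∈ prodSet X Y := ⟨hx, hy⟩
    have hgap := sub_le_inner_saddleOp_s18 hFdiff hcvx hccv hzrS hu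
    simp only [WithLp.toLp_fst, WithLp.toLp_snd] at hgap
    have hvi := inner_le_of_regularized_vi hr_pos.le (hzr _ hu)
    have hdiam := norm_sub_sq_le_of_mem_prodSet hXD hYD hz₀ hu
    have hreg : r * ‖z₀ - WithLp.toLp 2 (x, y)‖ ^ 2 ≤ r * (2 * D ^ 2) :=
      mul_le_mul_of_nonneg_left hdiam hr_pos.le
    change F (zr.fst, y) - F (x, zr.snd) ≤ 2 * ε
    linarith
  · have hw := norm_sub_sq_le_of_regularized_vi
      (inner_saddleOp_sub_nonneg hFdiff hcvx hccv hzrS hzr'S) (hzr _ hzr'S) (hzr' _ hzrS)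
    have hcs : ⟪z₀ - z₀', zr - zr'⟫ ≤ δ * ‖zr - zr'‖ :=
      (real_inner_le_norm _ _).trans (mul_le_mul_of_nonneg_right hdev (norm_nonneg _))
    have hquad : ‖zr - zr'‖ ^ 2 ≤ δ ^ 2 / 4 + δ * ‖zr - zr'‖ := by
      refine le_of_mul_le_mul_left ?_ hr_pos
      nlinarith [mul_le_mul_of_nonneg_left hcs hr_pos.le]
    nlinarith [norm_nonneg (zr - zr'), sq_nonneg (‖zr - zr'‖ - 2 * δ)]

/-- Theorem 4.5: regularized minimax framework under the δ-inexact
initialization oracle.  With `r = ε/D²` and `ε_r = ε·min{1, δ²/(8D²)}`, if `z_r` solves the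
regularized problem with center `z₀` to variational-inequality accuracy `ε_r`, and `z_r'` the
one with center `z₀'` where `‖z₀ − z₀'‖ ≤ δ`, then the duality gap of `z_r` is at most `2ε`
and `‖z_r − z_r'‖² ≤ 4δ²`. -/
theorem regularized_minimax_inexact_init
    (X : Set E) (Y : Set E') (hXne : X.Nonempty) (hYne : Y.Nonempty)
    (hXcl : IsClosed X) (hYcl : IsClosed Y) (hXcv : Convex ℝ X) (hYcv : Convex ℝ Y)
    (D : ℝ) (hD : 0 < D)
    (hXD : ∀ s₁ ∈ X, ∀ s₂ ∈ X, ‖s₁ - s₂‖ ≤ D) (hYD : ∀ s₁ ∈ Y, ∀ s₂ ∈ Y, ‖s₁ - s₂‖ ≤ D)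
    (F : E × E' → ℝ) (hFdiff : Differentiable ℝ F)
    (hcvx : ∀ y ∈ Y, ConvexOn ℝ X (fun x => F (x, y)))
    (hccv : ∀ x ∈ X, ConcaveOn ℝ Y (fun y => F (x, y)))
    (ℓ : ℝ) (hℓ : 0 < ℓ)
    (hlip : ∀ z₁ ∈ prodSet X Y, ∀ z₂ ∈ prodSet X Y,
      ‖saddleOp F z₁ - saddleOp F z₂‖ ≤ ℓ * ‖z₁ - z₂‖)
    (ε δ : ℝ) (hε : 0 < ε) (hδ : 0 ≤ δ)
    (r εr : ℝ) (hr : r = ε / D ^ 2) (hεr : εr = ε * min 1 (δ ^ 2 / (8 * D ^ 2)))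
    (z₀ z₀' : WithLp 2 (E × E')) (hz₀ : z₀ ∈ prodSet X Y) (hz₀' : z₀' ∈ prodSet X Y)
    (hdev : ‖z₀ - z₀'‖ ≤ δ)
    (zr zr' : WithLp 2 (E × E')) (hzrS : zr ∈ prodSet X Y) (hzr'S : zr' ∈ prodSet X Y)
    (hzr : ∀ z ∈ prodSet X Y, ⟪saddleOp F zr + r • (zr - z₀), zr - z⟫ ≤ εr)
    (hzr' : ∀ z ∈ prodSet X Y, ⟪saddleOp F zr' + r • (zr' - z₀'), zr' - z⟫ ≤ εr) :
    (∀ x ∈ X, ∀ y ∈ Y,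
      F ((WithLp.equiv 2 (E × E') zr).1, y) - F (x, (WithLp.equiv 2 (E × E') zr).2) ≤ 2 * ε) ∧
    ‖zr - zr'‖ ^ 2 ≤ 4 * δ ^ 2 :=
  regularized_minimax_inexact_init_general X Y D hD hXD hYD F hFdiff hcvx hccv ε δ hε r εr hr hεr z₀
    z₀' hz₀ hdev zr zr' hzrS hzr'S hzr hzr'
end
end
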